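/- Fix ε̃ ∈ (0,1]. Given a RochetNet menu M = {(x^(k), p^(k))}_{k∈{0,...,K}}, define the menu M̃ = {(x̃^(k), p̃^(k))}_{k∈{0,...,K}} by x̃^(k)_j = ε̃ ⌊x^(k)_j / ε̃⌋ for every coordinate j and p̃^(k) = (1 − √ε̃) p^(k). Then Rev(M̃) ≥ Rev(M) − 2√ε̃. -/

import Mathlib

open MeasureTheory Finset

namespace RN

/-- A RochetNet menu: for each of the `K+1` option indices, an allocation in `[0,1]^n`
and a price. -/
abbrev Menu (n K : ℕ) := Fin (K + 1) → (Fin n → ℝ) × ℝ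

/-- Inner product of a valuation and an allocation. -/
def dotp {n : ℕ} (v x : Fin n → ℝ) : ℝ := ∑ j, v j * x j

/-- A valid menu: allocations in `[0,1]^n`, nonnegative prices, default option `(0,0)`. -/
def IsMenu {n K : ℕ} (M : Menu n K) : Prop :=
  (∀ k j, 0 ≤ (M k).1 j ∧ (M k).1 j ≤ 1) ∧ (∀ k, 0 ≤ (M k).2) ∧ M 0 = 0

/-- Utility of option `k` for valuation `v`. -/
def util {n K : ℕ} (M : Menu n K) (v : Fin n → ℝ) (k : Fin (K + 1)) : ℝ :=
  dotp v (M k).1 - (M k).2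

/-- Price extracted at valuation `v`: the maximal price among utility-maximizing options. -/
noncomputable def price {n K : ℕ} (M : Menu n K) (v : Fin n → ℝ) : ℝ :=
  sSup {p : ℝ | ∃ k, (∀ k', util M v k' ≤ util M v k) ∧ p = (M k).2}

/-- Option `k` is the buyer's selected option at `v`: it maximizes utility and, among
utility maximizers, has maximal price. -/
def Selected {n K : ℕ} (M : Menu n K) (v : Fin n → ℝ) (k : Fin (K + 1)) : Prop :=
  (∀ k', util M v k' ≤ util M v k) ∧ (M k).2 = price M v

/-- The set of valuations. -/
def V (n : ℕ) : Set (Fin n → ℝ) :=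
  {v | (∀ j, 0 ≤ v j ∧ v j ≤ 1) ∧ ∑ j, v j ≤ 1}

/-- Expected revenue of menu `M` under valuation distribution `F`. -/
noncomputable def Rev {n K : ℕ} (F : Measure (Fin n → ℝ)) (M : Menu n K) : ℝ :=
  ∫ v, price M v ∂F

/-- Option-wise convex combination `lam • M + (1 - lam) • M'` of two menus. -/
noncomputable def comb {n K : ℕ} (lam : ℝ) (M M' : Menu n K) : Menu n K :=
  fun k => (fun j => lam * (M k).1 j + (1 - lam) * (M' k).1 j,
            lam * (M k).2 + (1 - lam) * (M' k).2)

/-- `M` is `ε`-reducible: some subset `K'` of options containing the default option, of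
cardinality at most `√(K+1)`, contains the buyer's selected option with probability
at least `1 - ε`. -/
def Reducible {n K : ℕ} (F : Measure (Fin n → ℝ)) (M : Menu n K) (ε : ℝ) : Prop :=
  ∃ K' : Finset (Fin (K + 1)), 0 ∈ K' ∧ (K'.card : ℝ) ≤ Real.sqrt (K + 1) ∧
    (F {v | ∃ k ∈ K', Selected M v k}).toReal ≥ 1 - ε

/-- `M₁` and `M₂` are `ε`-mode-connected by a piecewise linear path with `pieces` linear
pieces, all whose menus are valid and have revenue at least `min (Rev M₁) (Rev M₂) - ε`. -/
def PLConnected {n K : ℕ} (F : Measure (Fin n → ℝ)) (M₁ M₂ : Menu n K) (ε : ℝ)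
    (pieces : ℕ) : Prop :=
  ∃ P : Fin (pieces + 1) → Menu n K, P 0 = M₁ ∧ P (Fin.last pieces) = M₂ ∧
    (∀ i, IsMenu (P i)) ∧
    ∀ i : Fin pieces, ∀ lam ∈ Set.Icc (0 : ℝ) 1,
      Rev F (comb lam (P i.castSucc) (P i.succ)) ≥ min (Rev F M₁) (Rev F M₂) - ε

/-- The discretized menu: each allocation coordinate is rounded down to a multiple of
`εt` and each price is rescaled by `1 - √εt`. -/
noncomputable def discretize {n K : ℕ} (εt : ℝ) (M : Menu n K) : Menu n K :=
  fun k => (fun j => εt * (⌊(M k).1 j / εt⌋₊ : ℝ), (1 - Real.sqrt εt) * (M k).2)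

/-!
Fix `v ∈ V n`, put `s = √εt`, and let `k`, `k'` be the options sold at `v` by `M` and by the
discretized menu. Rounding down never raises a value `v ⬝ x`, and lowers it by at most
`εt * ∑ j, v j ≤ s ^ 2`. Adding the two optimality conditions (of `k` in `M` against `k'`, of
`k'` in the discretized menu against `k`) leaves `s * p k - s ^ 2 ≤ s * p k'`, so the new price
`(1 - s) * p k'` is at least `(1 - s) * (p k - s) ≥ p k - 2 * s`, using `p k ≤ v ⬝ x k ≤ 1`.
Integrating this pointwise bound over `F`, which lives on `V n`, gives the theorem.
-/

def optimalRegion {n K : ℕ} (M : Menu n K) (k : Fin (K + 1)) : Set (Fin n → ℝ) :=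
  {w | ∀ k', util M w k' ≤ util M w k}

section Price

variable {n K : ℕ} (M : Menu n K) (v : Fin n → ℝ)

lemma finite_optimal_prices :
    {p : ℝ | ∃ k, (∀ k', util M v k' ≤ util M v k) ∧ p = (M k).2}.Finite :=
  (Set.finite_range fun k => (M k).2).subset (by rintro p ⟨k, -, rfl⟩; exact ⟨k, rfl⟩)

lemma exists_selected : ∃ k, Selected M v k := by
  obtain ⟨k, hk⟩ := Finite.exists_max (util M v)
  have hne : {p : ℝ | ∃ k, (∀ k', util M v k' ≤ util M v k) ∧ p = (M k).2}.Nonempty :=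
    ⟨_, k, hk, rfl⟩
  obtain ⟨k₀, hk₀, hprice⟩ := hne.csSup_mem (finite_optimal_prices M v)
  exact ⟨k₀, hk₀, hprice.symm⟩

lemma le_price {k : Fin (K + 1)} (hk : v ∈ optimalRegion M k) : (M k).2 ≤ price M v :=
  le_csSup (finite_optimal_prices M v).bddAbove ⟨k, hk, rfl⟩

lemma price_nonneg (hp : ∀ k, 0 ≤ (M k).2) : 0 ≤ price M v := by
  obtain ⟨k, -, hk⟩ := exists_selected M v
  exact hk ▸ hp k

lemma abs_price_le_sum : |price M v| ≤ ∑ k, |(M k).2| := by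
  obtain ⟨k, -, hk⟩ := exists_selected M v
  exact hk ▸ Finset.single_le_sum (f := fun k => |(M k).2|) (fun _ _ => abs_nonneg _)
    (Finset.mem_univ k)

end Price

section Measurability

variable {n K : ℕ}

lemma continuous_util (M : Menu n K) (k : Fin (K + 1)) :
    Continuous fun v : Fin n → ℝ => util M v k := by
  unfold util dotp
  fun_prop

lemma isClosed_optimalRegion (M : Menu n K) (k : Fin (K + 1)) :
    IsClosed (optimalRegion M k) := by
  simp only [optimalRegion, Set.ofPred_forall]
  exact isClosed_iInter fun k' => isClosed_le (continuous_util M k') (continuous_util M k)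

lemma price_eq_sup'_indicator (M : Menu n K) (hp : ∀ k, 0 ≤ (M k).2) :
    price M = Finset.univ.sup' Finset.univ_nonempty fun k =>
      (optimalRegion M k).indicator fun _ => (M k).2 := by
  funext v
  rw [Finset.sup'_apply]
  obtain ⟨k₀, hk₀, hprice⟩ := exists_selected M v
  refine le_antisymm ?_ (Finset.sup'_le _ _ fun k _ => ?_)
  · rw [← hprice, ← Set.indicator_of_mem (show v ∈ optimalRegion M k₀ from hk₀)
      (fun _ => (M k₀).2)]
    exact Finset.le_sup' (fun k => (optimalRegion M k).indicator (fun _ => (M k).2) v)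
      (Finset.mem_univ k₀)
  · by_cases hk : v ∈ optimalRegion M k
    · rw [Set.indicator_of_mem hk]
      exact le_price M v hk
    · rw [Set.indicator_of_notMem hk]
      exact price_nonneg M v hp

lemma measurable_price (M : Menu n K) (hp : ∀ k, 0 ≤ (M k).2) : Measurable (price M) := by
  rw [price_eq_sup'_indicator M hp]
  exact Finset.measurable_sup' _ fun k _ =>
    measurable_const.indicator (isClosed_optimalRegion M k).measurableSet

lemma integrable_price (F : Measure (Fin n → ℝ)) [IsFiniteMeasure F] (M : Menu n K)
    (hp : ∀ k, 0 ≤ (M k).2) : Integrable (price M) F :=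
  .of_bound (measurable_price M hp).aestronglyMeasurable _
    (ae_of_all _ fun v => abs_price_le_sum M v)

lemma isClosed_V (n : ℕ) : IsClosed (V n) := by
  simp only [V, Set.ofPred_and, Set.ofPred_forall]
  exact (isClosed_iInter fun j => (isClosed_le continuous_const (continuous_apply j)).inter
    (isClosed_le (continuous_apply j) continuous_const)).inter
    (isClosed_le (by fun_prop) continuous_const)

lemma rev_sub_le_rev_of_ae {F : Measure (Fin n → ℝ)} [IsProbabilityMeasure F]
    {M M' : Menu n K} (hp : ∀ k, 0 ≤ (M k).2) (hp' : ∀ k, 0 ≤ (M' k).2) {c : ℝ}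
    (h : ∀ᵐ v ∂F, price M v - c ≤ price M' v) : Rev F M - c ≤ Rev F M' := by
  have hint := integrable_price F M hp
  calc Rev F M - c = ∫ v, (price M v - c) ∂F := by
        rw [integral_sub hint (integrable_const c), integral_const, probReal_univ, one_smul, Rev]
    _ ≤ Rev F M' := integral_mono_ae (hint.sub (integrable_const c))
        (integrable_price F M' hp') h

end Measurability

section Discretization

variable {n K : ℕ}

lemma price_sub_two_mul_le_price_of_discount {M M' : Menu n K} {v : Fin n → ℝ} {s : ℝ}
    (hs0 : 0 < s) (hs1 : s ≤ 1) (hprice : ∀ k, (M' k).2 = (1 - s) * (M k).2)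
    (hdown : ∀ k, dotp v (M' k).1 ≤ dotp v (M k).1)
    (hup : ∀ k, dotp v (M k).1 - s ^ 2 ≤ dotp v (M' k).1) (hle : price M v ≤ 1) :
    price M v - 2 * s ≤ price M' v := by
  obtain ⟨k, hk, hkp⟩ := exists_selected M v
  obtain ⟨k', hk', hk'p⟩ := exists_selected M' v
  have hu := hk k'
  have hu' := hk' k
  simp only [util, hprice] at hu hu'
  rw [← hkp] at hle ⊢
  rw [← hk'p, hprice]
  have hscaled : s * ((M k).2 - s) ≤ s * (M k').2 := by nlinarith [hdown k', hup k]
  have hk'k : (M k).2 - s ≤ (M k').2 := le_of_mul_le_mul_left hscaled hs0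
  nlinarith [mul_le_mul_of_nonneg_left hk'k (sub_nonneg.2 hs1)]

section Floor

variable {α : Type*} [Field α] [LinearOrder α] [IsStrictOrderedRing α] [FloorSemiring α]

lemma mul_floor_div_le {ε a : α} (hε : 0 < ε) (ha : 0 ≤ a) : ε * ⌊a / ε⌋₊ ≤ a :=
  (le_div_iff₀' hε).1 (Nat.floor_le (div_nonneg ha hε.le))

lemma sub_le_mul_floor_div {ε : α} (hε : 0 < ε) (a : α) : a - ε ≤ ε * ⌊a / ε⌋₊ := by
  have := mul_lt_mul_of_pos_left (Nat.sub_one_lt_floor (a / ε)) hε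
  rw [mul_sub, mul_div_cancel₀ _ hε.ne', mul_one] at this
  exact this.le

end Floor

lemma dotp_le_sum {v x : Fin n → ℝ} (hv : ∀ j, 0 ≤ v j) (hx : ∀ j, x j ≤ 1) :
    dotp v x ≤ ∑ j, v j :=
  Finset.sum_le_sum fun j _ => mul_le_of_le_one_right (hv j) (hx j)

lemma price_le_one {M : Menu n K} (hM : IsMenu M) {v : Fin n → ℝ} (hv : v ∈ V n) :
    price M v ≤ 1 := by
  obtain ⟨k, hk, hkp⟩ := exists_selected M v
  have hbeats_default : util M v 0 ≤ util M v k := hk 0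
  simp only [util, hM.2.2, Prod.fst_zero, Prod.snd_zero, dotp, Pi.zero_apply, mul_zero,
    Finset.sum_const_zero, sub_zero, sub_nonneg] at hbeats_default
  calc price M v = (M k).2 := hkp.symm
    _ ≤ dotp v (M k).1 := hbeats_default
    _ ≤ ∑ j, v j := dotp_le_sum (fun j => (hv.1 j).1) fun j => (hM.1 k j).2
    _ ≤ 1 := hv.2

lemma price_sub_le_price_discretize {ε : ℝ} (hε0 : 0 < ε) (hε1 : ε ≤ 1) {M : Menu n K}
    (hM : IsMenu M) {v : Fin n → ℝ} (hv : v ∈ V n) :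
    price M v - 2 * Real.sqrt ε ≤ price (discretize ε M) v := by
  have hsq : Real.sqrt ε ^ 2 = ε := Real.sq_sqrt hε0.le
  refine price_sub_two_mul_le_price_of_discount (Real.sqrt_pos.2 hε0)
    (Real.sqrt_le_one.2 hε1) (fun k => rfl) (fun k => ?_) (fun k => ?_) (price_le_one hM hv)
  · exact Finset.sum_le_sum fun j _ =>
      mul_le_mul_of_nonneg_left (mul_floor_div_le hε0 (hM.1 k j).1) (hv.1 j).1
  · have hround : ∑ j, v j * ((M k).1 j - ε) ≤ dotp v (discretize ε M k).1 :=
      Finset.sum_le_sum fun j _ =>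
        mul_le_mul_of_nonneg_left (sub_le_mul_floor_div hε0 _) (hv.1 j).1
    simp only [mul_sub, Finset.sum_sub_distrib, ← Finset.sum_mul] at hround
    have : (∑ j, v j) * ε ≤ ε := mul_le_of_le_one_left hε0.le hv.2
    rw [hsq, dotp]
    linarith

end Discretization

/-- For `εt ∈ (0,1]`, rounding allocations of `M` down to multiples of
`εt` and discounting prices by the factor `1 - √εt` loses at most `2√εt` revenue. -/
theorem statement7 {n K : ℕ} (F : Measure (Fin n → ℝ)) [IsProbabilityMeasure F]
    (hFV : F (V n) = 1) (εt : ℝ) (hε0 : 0 < εt) (hε1 : εt ≤ 1)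
    (M : Menu n K) (hM : IsMenu M) :
    Rev F (discretize εt M) ≥ Rev F M - 2 * Real.sqrt εt := by
  have hdiscount : 0 ≤ 1 - Real.sqrt εt := sub_nonneg.2 (Real.sqrt_le_one.2 hε1)
  have hV : ∀ᵐ v ∂F, v ∈ V n :=
    (ae_mem_iff_measure_eq (isClosed_V n).measurableSet.nullMeasurableSet).2
      (by rw [hFV, measure_univ])
  refine rev_sub_le_rev_of_ae hM.2.1 (fun k => mul_nonneg hdiscount (hM.2.1 k)) ?_
  filter_upwards [hV] with v hv
  exact price_sub_le_price_discretize hε0 hε1 hM hv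

end RN
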